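/- In the Schur algebra S(n,r) over ℚ, viewed as a quotient of the universal enveloping algebra U(gl_n), the weight idempotent 1_λ coincides with the image of the element ∏_{i=1}^n binom(H_i, λ_i), for any λ ∈ Λ(n,r), where binom(H,a) = H(H−1)⋯(H−a+1)/a! and H_i = e_{ii}. -/

import Mathlib

/-!
STATEMENT 12: In the Schur algebra `S(n,r)` over `ℚ`, viewed as a quotient of the universal
enveloping algebra `U(gl_n)` via the representation `dρ` on `E^{⊗r}` (obtained by
differentiating the diagonal `GL_n`-action), the weight idempotent `1_λ` coincides with the
image of `∏_{i=1}^n binom(H_i, λ_i)`, for any `λ ∈ Λ(n,r)`, where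
`binom(H,a) = H(H−1)⋯(H−a+1)/a!` and `H_i = e_{ii}`.

We model `E^{⊗r}` as `(Fin r → Fin n) → ℚ`, `dρ` is characterized by its values on `gl_n`:
`X` acts as `∑_k 1⊗⋯⊗X⊗⋯⊗1`, which in the standard basis is the matrix
`(i,j) ↦ ∑_k X_{i_k j_k} ∏_{l≠k} δ_{i_l j_l}`.  The statement quantifies over all algebra
maps `π : U(gl_n) → End(E^{⊗r})` extending this Lie algebra representation.
-/

open scoped BigOperators

namespace SchurPaper

variable (n r : ℕ)

abbrev TSpQ := (Fin r → Fin n) → ℚ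

def wt (i : Fin r → Fin n) : Fin n → ℕ :=
  fun j => (Finset.univ.filter fun k => i k = j).card

/-- The weight idempotent `1_λ`. -/
def proj (lam : Fin n → ℕ) : TSpQ n r →ₗ[ℚ] TSpQ n r where
  toFun f := fun i => if wt n r i = lam then f i else 0
  map_add' f g := by funext i; by_cases h : wt n r i = lam <;> simp [h]
  map_smul' c f := by funext i; by_cases h : wt n r i = lam <;> simp [h]

/-- The derivative of the diagonal action: `X ∈ gl_n` acts on `E^{⊗r}` as
`∑_k 1⊗⋯⊗X⊗⋯⊗1`. -/
noncomputable def dAct (X : Matrix (Fin n) (Fin n) ℚ) : Module.End ℚ (TSpQ n r) :=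
  Matrix.toLin' (Matrix.of fun i j : Fin r → Fin n =>
    ∑ k, if ∀ l, l ≠ k → i l = j l then X (i k) (j k) else 0)

attribute [local instance] LieRing.ofAssociativeRing

/-- The universal enveloping algebra of `gl_n` over `ℚ`. -/
abbrev Ugl := UniversalEnvelopingAlgebra ℚ (Matrix (Fin n) (Fin n) ℚ)

/-- `binom(H, a) = H(H-1)⋯(H-a+1)/a!` as an element of `U(gl_n)`. -/
noncomputable def binomU (H : Ugl n) (a : ℕ) : Ugl n :=
  ((a.factorial : ℚ)⁻¹) • ((List.range a).map fun t => H - (t : ℚ) • 1).prod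

/-!
Each `H_i` acts diagonally on the standard basis `e_x` of `E^{⊗r}` with eigenvalue `wt x i`, so
`binom(H_i, a)` acts by `binom(wt x i, a)` and the image of the product is diagonal with entries
`∏ᵢ binom(wt x i, λᵢ)`. As `wt x` and `λ` both sum to `r`, either `wt x = λ` and every factor is `1`,
or `wt x i < λᵢ` for some `i` and that factor vanishes.
-/

open Polynomial

lemma list_prod_map_sub_smul_one_eq_aeval_descPochhammer {R A : Type*} [CommRing R] [Ring A]
    [Algebra R A] (h : A) (a : ℕ) :
    (((List.range a).map (Nat.cast : ℕ → R)).map fun t => h - t • 1).prod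
      = aeval h (descPochhammer R a) := by
  induction a with
  | zero => simp
  | succ a ih =>
    rw [List.range_succ, List.map_append, List.map_append, List.prod_append, ih,
      descPochhammer_succ_right]
    simp [Algebra.smul_def]

lemma binomU_eq_aeval (H : Ugl n) (a : ℕ) :
    binomU n H a = (a.factorial : ℚ)⁻¹ • aeval H (descPochhammer ℚ a) := by
  rw [binomU, ← list_prod_map_sub_smul_one_eq_aeval_descPochhammer]
  -- in `binomU`, `List.range a` is coerced to `List ℚ` through the list monad
  simp only [List.pure_def, List.bind_eq_flatMap, ← List.map_eq_flatMap]

lemma inv_factorial_smul_aeval_descPochhammer_natCast {K X : Type*} [Field K] [CharZero K]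
    (w : X → ℕ) (a : ℕ) :
    (a.factorial : K)⁻¹ • aeval (fun x => (w x : K)) (descPochhammer K a)
      = fun x => ((w x).choose a : K) := by
  funext x
  rw [Pi.smul_apply, aeval_pi_apply₂, coe_aeval_eq_eval, Nat.cast_choose_eq_descPochhammer_div,
    smul_eq_mul, inv_mul_eq_div]

lemma prod_choose_eq_ite_of_sum_eq {ι : Type*} [Fintype ι] [DecidableEq ι] {f g : ι → ℕ}
    (h : ∑ i, f i = ∑ i, g i) : ∏ i, (f i).choose (g i) = if f = g then 1 else 0 := by
  split_ifs with hfg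
  · simp [hfg]
  · obtain ⟨i, hi⟩ : ∃ i, f i < g i := by
      by_contra! hle
      exact hfg (funext fun i => ((Finset.sum_eq_sum_iff_of_le fun i _ => hle i).1 h.symm i
        (Finset.mem_univ i)).symm)
    exact Finset.prod_eq_zero (Finset.mem_univ i) (Nat.choose_eq_zero_of_lt hi)

lemma sum_wt (x : Fin r → Fin n) : ∑ j, wt n r x j = r := by
  simpa [wt] using (Finset.card_eq_sum_card_fiberwise (f := x) (s := Finset.univ)
    (t := Finset.univ) fun k _ => Finset.mem_univ _).symm

lemma proj_eq_lmul (lam : Fin n → ℕ) :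
    proj n r lam = Algebra.lmul ℚ (TSpQ n r) (fun x => if wt n r x = lam then 1 else 0) := by
  ext f x
  simp [proj]

lemma dAct_single_eq_lmul (a : Fin n) :
    dAct n r (Matrix.single a a 1) = Algebra.lmul ℚ (TSpQ n r) (fun x => (wt n r x a : ℚ)) := by
  have hdiag : (Matrix.of fun i j : Fin r → Fin n =>
      ∑ k, if ∀ l, l ≠ k → i l = j l then Matrix.single a a (1 : ℚ) (i k) (j k) else 0)
      = Matrix.diagonal fun x => (wt n r x a : ℚ) := by
    ext x y
    by_cases hxy : x = y
    · subst hxy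
      simp [Matrix.single_apply, wt, eq_comm]
    · rw [Matrix.diagonal_apply_ne _ hxy, Matrix.of_apply]
      refine Finset.sum_eq_zero fun k _ => ?_
      rw [ite_eq_right_iff]
      intro hoff
      apply Matrix.single_apply_of_ne
      rintro ⟨hxk, hyk⟩
      refine hxy (funext fun l => ?_)
      by_cases hlk : l = k
      · rw [hlk, ← hxk, ← hyk]
      · exact hoff l hlk
  ext f x
  simp [dAct, hdiag, Matrix.mulVec_diagonal]

theorem weight_idempotent_eq_binom_image
    (lam : Fin n → ℕ) (hlam : ∑ i, lam i = r)
    (π : Ugl n →ₐ[ℚ] Module.End ℚ (TSpQ n r))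
    (hπ : ∀ X : Matrix (Fin n) (Fin n) ℚ,
      π (UniversalEnvelopingAlgebra.ι ℚ X) = dAct n r X) :
    π (((List.finRange n).map fun i =>
        binomU n (UniversalEnvelopingAlgebra.ι ℚ (Matrix.single i i (1:ℚ))) (lam i)).prod)
      = proj n r lam := by
  have hbinom (i : Fin n) :
      π (binomU n (UniversalEnvelopingAlgebra.ι ℚ (Matrix.single i i 1)) (lam i))
        = Algebra.lmul ℚ (TSpQ n r) fun x => ((wt n r x i).choose (lam i) : ℚ) := by
    rw [binomU_eq_aeval, map_smul, ← aeval_algHom_apply, hπ, dAct_single_eq_lmul,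
      aeval_algHom_apply, ← map_smul, inv_factorial_smul_aeval_descPochhammer_natCast]
  calc _ = ((List.finRange n).map fun i =>
        Algebra.lmul ℚ (TSpQ n r) fun x => ((wt n r x i).choose (lam i) : ℚ)).prod := by
        rw [map_list_prod, List.map_map]
        exact congrArg List.prod (List.map_congr_left fun i _ => hbinom i)
    _ = Algebra.lmul ℚ (TSpQ n r) fun x => ∏ i, ((wt n r x i).choose (lam i) : ℚ) := by
        rw [← Finset.prod_fn, Fin.prod_univ_def, map_list_prod, List.map_map]
        rfl
    _ = proj n r lam := by
        rw [proj_eq_lmul]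
        congr 1
        funext x
        exact_mod_cast prod_choose_eq_ite_of_sum_eq ((sum_wt n r x).trans hlam.symm)

end SchurPaper
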